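/- arXiv:1805.07028 — 6 statements merged into one kernel-verified Lean document; each statement's English description precedes it below -/
import Mathlib

section
/- Let G be a Hausdorff abelian topological group which is an Ascoli space. Then every compact subset K of the Pontryagin dual group G^∧ (the group of continuous characters of G into the circle group, endowed with the compact-open topology) is equicontinuous as a family of maps from G to the circle. (Equivalently, the canonical evaluation homomorphism from G into its bidual is continuous.) -/
/-!
Postcomposition with a continuous `φ : 𝕊 → ℝ` maps a compact `K ⊆ G^∧` continuously onto a
compact, hence (as `G` is Ascoli) equicontinuous, subset of `C(G, ℝ)`. Real and imaginary
part together embed `𝕊` uniformly into `ℝ × ℝ`, so equicontinuity of their two families gives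
that of `K`.
-/

/-- A topological space `X` is *Ascoli* if every compact subset of `C(X, ℝ)`
(the space of continuous real-valued functions with the compact-open topology)
is equicontinuous. -/
def IsAscoli (X : Type*) [TopologicalSpace X] : Prop :=
  ∀ K : Set C(X, ℝ), IsCompact K → Equicontinuous (fun f : K => ((f : C(X, ℝ)) : X → ℝ))

theorem Equicontinuous.prodMk {ι X α β : Type*} [TopologicalSpace X] [UniformSpace α]
    [UniformSpace β] {F : ι → X → α} {F' : ι → X → β} (hF : Equicontinuous F)
    (hF' : Equicontinuous F') : Equicontinuous fun i x => (F i x, F' i x) := by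
  rw [equicontinuous_iff_continuous] at hF hF' ⊢
  exact UniformFun.uniformEquivProdArrow.symm.continuous.comp (hF.prodMk hF')

theorem equicontinuous_circle_of_re_im {ι X : Type*} [TopologicalSpace X] {F : ι → X → Circle}
    (hre : Equicontinuous fun i x => (F i x : ℂ).re)
    (him : Equicontinuous fun i x => (F i x : ℂ).im) : Equicontinuous F := by
  -- spelled with `@` so that `Circle.instUniformSpace`, not the subtype structure, is elaborated
  have hcoe : @IsUniformInducing Circle ℂ _ _ ((↑) : Circle → ℂ) :=
    isometry_subtype_coe.isUniformInducing
  rw [hcoe.equicontinuous_iff,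
    Complex.isUniformEmbedding_equivRealProd.isUniformInducing.equicontinuous_iff]
  exact hre.prodMk him

theorem IsAscoli.equicontinuous_comp {X Y : Type*} [TopologicalSpace X] [TopologicalSpace Y]
    (hX : IsAscoli X) {K : Set C(X, Y)} (hK : IsCompact K) (φ : C(Y, ℝ)) :
    Equicontinuous fun f : K => φ ∘ (f : C(X, Y)) :=
  (hX _ (hK.image (ContinuousMap.continuous_postcomp φ))).comp
    fun f : K => ⟨φ.comp f, Set.mem_image_of_mem _ f.2⟩

theorem IsAscoli.equicontinuous_of_isCompact_circle {X : Type*} [TopologicalSpace X]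
    (hX : IsAscoli X) {K : Set C(X, Circle)} (hK : IsCompact K) :
    Equicontinuous fun f : K => (f : X → Circle) :=
  equicontinuous_circle_of_re_im
    (hX.equicontinuous_comp hK ⟨_, Complex.continuous_re.comp continuous_subtype_val⟩)
    (hX.equicontinuous_comp hK ⟨_, Complex.continuous_im.comp continuous_subtype_val⟩)

theorem ascoli_group_compact_dual_equicontinuous_general
    {G : Type*} [TopologicalSpace G] [CommGroup G]
    (hG : IsAscoli G) (K : Set (PontryaginDual G)) (hK : IsCompact K) :
    Equicontinuous (fun χ : K => ((χ : PontryaginDual G) : G → Circle)) := by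
  have hK' : IsCompact (ContinuousMonoidHom.toContinuousMap '' K) :=
    hK.image (ContinuousMonoidHom.isInducing_toContinuousMap G Circle).continuous
  exact (hG.equicontinuous_of_isCompact_circle hK').comp
    fun χ => ⟨_, Set.mem_image_of_mem _ χ.2⟩

/-- If a Hausdorff abelian topological group `G` is an Ascoli space, then every compact
subset of the Pontryagin dual `G^∧` is equicontinuous (as a family of maps `G → Circle`). -/
theorem ascoli_group_compact_dual_equicontinuous
    {G : Type*} [TopologicalSpace G] [CommGroup G] [IsTopologicalGroup G] [T2Space G]
    (hG : IsAscoli G) (K : Set (PontryaginDual G)) (hK : IsCompact K) :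
    Equicontinuous (fun χ : K => ((χ : PontryaginDual G) : G → Circle)) :=
  ascoli_group_compact_dual_equicontinuous_general hG K hK
end

section
/- Assume a Tychonoff space X admits a family 𝒰 = {U_i : i ∈ I} of open subsets of X, a subset A = {a_i : i ∈ I} of X, and a point z ∈ X such that: (i) a_i ∈ U_i for every i ∈ I; (ii) for each compact subset C of X the set {i ∈ I : C ∩ U_i ≠ ∅} is finite; (iii) z is a cluster point of A, i.e., z belongs to the closure of A \ {z}. Then X is not an Ascoli space; that is, there exists a compact subset of C(X, ℝ) with the compact-open topology which is not equicontinuous. -/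
/-!
Choose continuous bumps `g i` with `g i (a i) = 1` vanishing off `U i`. Since a compact set meets
only finitely many `U i`, the bumps tend to `0` uniformly on compacta, so `{0} ∪ {g i}` is compact
in `C(X, ℝ)`. Only finitely many `U i` contain `z`, so `z` still lies in the closure of the points
`a j` with `z ∉ U j`; there `g j` jumps from `0` at `z` to `1` at `a j`, which rules out
equicontinuity at `z`.
-/

open Set Filter Topology

theorem CompletelyRegularSpace.exists_continuousMap_eq_one_eqOn_zero_compl
    {X : Type*} [TopologicalSpace X] [CompletelyRegularSpace X] {U : Set X} (hU : IsOpen U)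
    {x : X} (hx : x ∈ U) : ∃ g : C(X, ℝ), g x = 1 ∧ EqOn g 0 Uᶜ := by
  obtain ⟨f, hf, hfx, hfU⟩ := completely_regular_isOpen x U hU hx
  refine ⟨⟨fun y => 1 - (f y : ℝ), by fun_prop⟩, by simp [hfx], fun y hy => ?_⟩
  simp [hfU hy]

theorem ContinuousMap.tendsto_cofinite_const_of_eqOn_compl
    {X Y ι : Type*} [TopologicalSpace X] [UniformSpace Y] {U : ι → Set X}
    (hU : ∀ C : Set X, IsCompact C → {i | (C ∩ U i).Nonempty}.Finite)
    {g : ι → C(X, Y)} {y : Y} (hg : ∀ i, EqOn (g i) (fun _ => y) (U i)ᶜ) :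
    Tendsto g cofinite (𝓝 (ContinuousMap.const X y)) := by
  refine tendsto_iff_forall_isCompact_tendstoUniformlyOn.2 fun C hC u hu => ?_
  filter_upwards [(hU C hC).eventually_cofinite_notMem] with i hi x hx
  rw [hg i fun hxU => hi ⟨x, hx, hxU⟩]
  exact refl_mem_uniformity hu

theorem mem_closure_image_of_finite_compl {X ι : Type*} [TopologicalSpace X] [T1Space X]
    {a : ι → X} {z : X} (hz : z ∈ closure (range a \ {z})) {s : Set ι} (hs : sᶜ.Finite) :
    z ∈ closure (a '' s) := by
  have hfreq : ∃ᶠ y in 𝓝[≠] z, y ∈ range a := by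
    rw [frequently_nhdsWithin_iff]
    exact mem_closure_iff_frequently.1 hz
  have hev : ∀ᶠ y in 𝓝[≠] z, y ∉ a '' sᶜ :=
    nhdsNE_le_cofinite z (hs.image a).eventually_cofinite_notMem
  have hfreq' : ∃ᶠ y in 𝓝 z, y ∈ range a ∧ y ∉ a '' sᶜ :=
    (hfreq.and_eventually hev).filter_mono nhdsWithin_le_nhds
  refine mem_closure_iff_frequently.2 (hfreq'.mono ?_)
  rintro _ ⟨⟨i, rfl⟩, hi⟩
  exact ⟨i, by_contra fun his => hi ⟨i, his, rfl⟩, rfl⟩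

/-- Sufficient condition for a Tychonoff space not to be Ascoli: if `X` admits a family of
open sets `U i`, points `a i ∈ U i`, and a point `z` such that every compact set meets only
finitely many `U i` and `z` is a cluster point of `{a i}`, then there is a compact subset of
`C(X, ℝ)` (with the compact-open topology) which is not equicontinuous. -/
theorem not_ascoli_of_family
    {X : Type*} [TopologicalSpace X] [T35Space X]
    {I : Type*} (U : I → Set X) (a : I → X) (z : X)
    (hUopen : ∀ i, IsOpen (U i))
    (haU : ∀ i, a i ∈ U i)
    (hfin : ∀ C : Set X, IsCompact C → {i : I | (C ∩ U i).Nonempty}.Finite)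
    (hz : z ∈ closure (Set.range a \ {z})) :
    ∃ K : Set C(X, ℝ), IsCompact K ∧
      ¬ Equicontinuous (fun f : K => ((f : C(X, ℝ)) : X → ℝ)) := by
  choose g hg_one hg_zero using fun i =>
    CompletelyRegularSpace.exists_continuousMap_eq_one_eqOn_zero_compl (hUopen i) (haU i)
  have hg : Tendsto g cofinite (𝓝 0) :=
    ContinuousMap.tendsto_cofinite_const_of_eqOn_compl hfin hg_zero
  set K : Set C(X, ℝ) := insert 0 (range g)
  refine ⟨K, hg.isCompact_insert_range_of_cofinite, fun hequi => ?_⟩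
  have hfar : z ∈ closure (a '' {i | z ∉ U i}) := mem_closure_image_of_finite_compl hz <| by
    simpa [compl_ofPred] using hfin {z} isCompact_singleton
  have hnear : ∀ᶠ y in 𝓝 z, ∀ f : K, dist (f.1 z) (f.1 y) < 1 :=
    hequi z _ (Metric.dist_mem_uniformity one_pos)
  obtain ⟨_, ⟨j, hzj, rfl⟩, hj⟩ :=
    ((mem_closure_iff_frequently.1 hfar).and_eventually hnear).exists
  have := hj ⟨g j, mem_insert_of_mem _ ⟨j, rfl⟩⟩
  simp [hg_zero j hzj, hg_one j] at this
end

section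
/- Let X be a Tychonoff space, z ∈ X, and let {g_i}_{i∈I} be continuous functions from X to [0, 2] and {U_i}_{i∈I} open subsets of X such that supp(g_i) ⊆ U_i for every i, the sets U_i are pairwise disjoint, z ∉ U_i for every i, and z belongs to the closure of ⋃_{i∈I} {x : g_i(x) ≥ 1}. Then for every equicontinuous subset 𝒦 of C(X, ℝ) and every ε > 0 there exist i ∈ I and a point x ∈ U_i such that |f(x) − f(z)| < ε for all f ∈ 𝒦, while g_i(x) − g_i(z) = g_i(x) ≥ 1 (note g_i(z) = 0 since z ∉ U_i ⊇ supp(g_i)). -/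
open Filter Topology

theorem EquicontinuousAt.eventually_abs_sub_lt {ι X : Type*} [TopologicalSpace X]
    {F : ι → X → ℝ} {z : X} (hF : EquicontinuousAt F z) {ε : ℝ} (hε : 0 < ε) :
    ∀ᶠ x in 𝓝 z, ∀ i, |F i x - F i z| < ε := by
  filter_upwards [Metric.equicontinuousAt_iff_right.mp hF ε hε] with x hx i
  simpa [Real.dist_eq, abs_sub_comm] using hx i

theorem exists_point_close_but_g_large_general
    {X : Type*} [TopologicalSpace X]
    {I : Type*} (z : X) (g : I → C(X, ℝ)) (U : I → Set X)
    (hsupp : ∀ i, tsupport (g i) ⊆ U i)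
    (hzU : ∀ i, z ∉ U i)
    (hz : z ∈ closure (⋃ i, {x : X | 1 ≤ g i x}))
    (𝒦 : Set C(X, ℝ))
    (heq : Equicontinuous (fun f : 𝒦 => ((f : C(X, ℝ)) : X → ℝ)))
    (ε : ℝ) (hε : 0 < ε) :
    ∃ i : I, ∃ x ∈ U i, (∀ f ∈ 𝒦, |f x - f z| < ε) ∧ g i z = 0 ∧ 1 ≤ g i x := by
  obtain ⟨x, hx𝒦, hx⟩ := mem_closure_iff_nhds.mp hz _ ((heq z).eventually_abs_sub_lt hε)
  obtain ⟨i, hgx⟩ := Set.mem_iUnion.mp hx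
  have hgz : g i z = 0 := image_eq_zero_of_notMem_tsupport fun h => hzU i (hsupp i h)
  have hxU : x ∈ U i := hsupp i (subset_tsupport _ (zero_lt_one.trans_le hgx).ne')
  exact ⟨i, x, hxU, fun f hf => hx𝒦 ⟨f, hf⟩, hgz, hgx⟩

/-- Given a point `z`, continuous functions `g i : X → [0, 2]` with supports in pairwise disjoint
open sets `U i` avoiding `z`, and `z` in the closure of `⋃ i {x | g i x ≥ 1}`: for every
equicontinuous `𝒦 ⊆ C(X, ℝ)` and every `ε > 0` there are `i ∈ I` and `x ∈ U i` such that
`|f x - f z| < ε` for all `f ∈ 𝒦`, while `g i z = 0` and `g i x ≥ 1`. -/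
theorem exists_point_close_but_g_large
    {X : Type*} [TopologicalSpace X] [T35Space X]
    {I : Type*} (z : X) (g : I → C(X, ℝ)) (U : I → Set X)
    (hrange : ∀ i x, g i x ∈ Set.Icc (0 : ℝ) 2)
    (hUopen : ∀ i, IsOpen (U i))
    (hsupp : ∀ i, tsupport (g i) ⊆ U i)
    (hdisj : Pairwise (fun i j => Disjoint (U i) (U j)))
    (hzU : ∀ i, z ∉ U i)
    (hz : z ∈ closure (⋃ i, {x : X | 1 ≤ g i x}))
    (𝒦 : Set C(X, ℝ))
    (heq : Equicontinuous (fun f : 𝒦 => ((f : C(X, ℝ)) : X → ℝ)))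
    (ε : ℝ) (hε : 0 < ε) :
    ∃ i : I, ∃ x ∈ U i, (∀ f ∈ 𝒦, |f x - f z| < ε) ∧ g i z = 0 ∧ 1 ≤ g i x :=
  exists_point_close_but_g_large_general z g U hsupp hzU hz 𝒦 heq ε hε
end

section
/- Let G be a topological group and let H be a dense subgroup of G, endowed with the subspace topology. If H is an Ascoli space, then G is an Ascoli space. -/
section

variable {ι X Y α : Type*} [TopologicalSpace X] [TopologicalSpace Y] [UniformSpace α]

theorem EquicontinuousWithinAt.equicontinuousAt_of_dense {F : ι → X → α} {S : Set X} {x₀ : X}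
    (h : EquicontinuousWithinAt F S x₀) (hS : Dense S) (hF : ∀ i, Continuous (F i)) :
    EquicontinuousAt F x₀ := by
  intro U hU
  obtain ⟨V, hV, hV_closed, hVU⟩ := mem_uniformity_isClosed hU
  have h_closed : IsClosed {x | ∀ i, (F i x₀, F i x) ∈ V} := by
    simp only [Set.ofPred_forall]
    exact isClosed_iInter fun i ↦ hV_closed.preimage (continuous_const.prodMk (hF i))
  obtain ⟨W, hW_open, hx₀W, hWV⟩ := mem_nhdsWithin.mp (h V hV)
  filter_upwards [hW_open.mem_nhds hx₀W] with x hx i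
  exact hVU (closure_minimal hWV h_closed (hS.open_subset_closure_inter hW_open hx) i)

theorem EquicontinuousAt.of_comp_homeomorph {F : ι → Y → α} {x : X} (e : X ≃ₜ Y)
    (h : EquicontinuousAt (fun i ↦ F i ∘ e) x) : EquicontinuousAt F (e x) := by
  intro U hU
  rw [← e.map_nhds_eq x]
  exact h U hU

end

theorem IsAscoli.equicontinuousWithinAt {X : Type*} [TopologicalSpace X] {s : Set X}
    (hs : IsAscoli s) {K : Set C(X, ℝ)} (hK : IsCompact K) {x : X} (hx : x ∈ s) :
    EquicontinuousWithinAt (fun f : K ↦ ((f : C(X, ℝ)) : X → ℝ)) s x := by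
  rw [← equicontinuousAt_restrict_iff _ ⟨x, hx⟩]
  have hK_restrict : IsCompact ((ContinuousMap.restrict s) '' K) :=
    hK.image (ContinuousMap.continuous_restrict s)
  exact (hs _ hK_restrict ⟨x, hx⟩).comp fun f ↦ ⟨_, Set.mem_image_of_mem _ f.2⟩

/-- If a dense subgroup `H` of a topological group `G` is an Ascoli space, then so is `G`. -/
theorem isAscoli_of_denseSubgroup
    {G : Type*} [Group G] [TopologicalSpace G] [IsTopologicalGroup G]
    (H : Subgroup G) (hdense : Dense (H : Set G))
    (hH : IsAscoli H) : IsAscoli G := by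
  intro K hK g
  let translate : C(G, ℝ) → C(G, ℝ) := fun f ↦ f.comp (Homeomorph.mulRight g)
  have hK_translate : IsCompact (translate '' K) :=
    hK.image (ContinuousMap.continuous_precomp _)
  have h_one : EquicontinuousAt (fun f : translate '' K ↦ ((f : C(G, ℝ)) : G → ℝ)) 1 :=
    (hH.equicontinuousWithinAt hK_translate H.one_mem).equicontinuousAt_of_dense hdense
      fun f ↦ f.1.continuous
  simpa using (h_one.comp fun f : K ↦ ⟨translate f, Set.mem_image_of_mem _ f.2⟩).of_comp_homeomorph
    (Homeomorph.mulRight g)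
end

section
/- Let G be a Hausdorff abelian topological group which is a k-space (i.e., whose topology is compactly generated: a set is closed if and only if its intersection with every compact subset is closed in that subset). Then every compact subset K of the Pontryagin dual group G^∧ (the group of continuous characters of G into the circle group, endowed with the compact-open topology) is equicontinuous; equivalently, the canonical evaluation homomorphism α_G from G into its bidual G^∧∧ is continuous. -/
/-!
For a compact set `K` of characters, equicontinuity means that `x ↦ (χ ↦ χ x)` is continuous from
`G` to the space of functions `K → 𝕊` with uniform convergence. Since `G` is a k-space it suffices
to check this on every compact `C ⊆ G`. There `C` is compact Hausdorff, hence locally compact, so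
evaluation `K × C → 𝕊` is jointly continuous; as `K` is compact, currying turns a jointly continuous
map into one that is continuous for uniform convergence on `K`.
-/

open Function UniformConvergence

theorem continuous_of_continuous_comp_val_of_isCompact {X Y : Type*} [TopologicalSpace X]
    [TopologicalSpace Y]
    (hk : ∀ s : Set X,
      (∀ C : Set X, IsCompact C → IsClosed ((fun x : C => (x : X)) ⁻¹' s)) → IsClosed s)
    {f : X → Y} (hf : ∀ C : Set X, IsCompact C → Continuous (f ∘ ((↑) : C → X))) :
    Continuous f :=
  continuous_iff_isClosed.2 fun _ hT => hk _ fun C hC => hT.preimage (hf C hC)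

theorem Equicontinuous.of_continuous_uncurry {ι X α : Type*} [TopologicalSpace ι] [CompactSpace ι]
    [TopologicalSpace X] [UniformSpace α] {F : ι → X → α} (hF : Continuous ↿F) :
    Equicontinuous F :=
  equicontinuous_iff_continuous.2 <|
    (ContinuousMap.continuous_iff_continuous_uniformFun _).1
      (ContinuousMap.curry ⟨_, hF.comp continuous_swap⟩).continuous

theorem PontryaginDual.continuous_eval_restrict {G : Type*} [TopologicalSpace G] [CommGroup G]
    [T2Space G] {C : Set G} (hC : IsCompact C) :
    Continuous fun p : PontryaginDual G × C => p.1 p.2 := by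
  have : CompactSpace C := isCompact_iff_compactSpace.1 hC
  have hrestrict : Continuous fun χ : PontryaginDual G => χ.toContinuousMap.restrict C :=
    (ContinuousMap.continuous_restrict C).comp
      (ContinuousMonoidHom.isInducing_toContinuousMap G Circle).continuous
  exact continuous_eval.comp (hrestrict.prodMap continuous_id)

theorem kspace_group_compact_dual_equicontinuous_general
    {G : Type*} [TopologicalSpace G] [CommGroup G] [T2Space G]
    (hk : ∀ s : Set G,
      (∀ C : Set G, IsCompact C → IsClosed ((fun x : C => (x : G)) ⁻¹' s)) → IsClosed s)
    (K : Set (PontryaginDual G)) (hK : IsCompact K) :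
    Equicontinuous (fun χ : K => ((χ : PontryaginDual G) : G → Circle)) := by
  have : CompactSpace K := isCompact_iff_compactSpace.1 hK
  rw [equicontinuous_iff_continuous]
  refine continuous_of_continuous_comp_val_of_isCompact hk fun C hC => ?_
  have hrestrict : Equicontinuous fun (χ : K) (x : C) => (χ : PontryaginDual G) x :=
    .of_continuous_uncurry <| (PontryaginDual.continuous_eval_restrict hC).comp
      (continuous_subtype_val.prodMap continuous_id)
  exact equicontinuous_iff_continuous.1 hrestrict

/-- If a Hausdorff abelian topological group `G` is a k-space (a set is closed as soon as its
intersection with every compact subset is closed in that subset), then every compact subset of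
the Pontryagin dual `G^∧` is equicontinuous (equivalently, the canonical evaluation homomorphism
`α_G : G → G^∧∧` is continuous). -/
theorem kspace_group_compact_dual_equicontinuous
    {G : Type*} [TopologicalSpace G] [CommGroup G] [IsTopologicalGroup G] [T2Space G]
    (hk : ∀ s : Set G,
      (∀ C : Set G, IsCompact C → IsClosed ((fun x : C => (x : G)) ⁻¹' s)) → IsClosed s)
    (K : Set (PontryaginDual G)) (hK : IsCompact K) :
    Equicontinuous (fun χ : K => ((χ : PontryaginDual G) : G → Circle)) :=
  kspace_group_compact_dual_equicontinuous_general hk K hK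
end

section
/- Let X be a Tychonoff space, K an infinite compact subset of X, (η_n)_{n≥1} an injective sequence in K, and η_0 a cluster point of {η_n : n ≥ 1} with η_0 ∉ {η_n : n ≥ 1}. Let (λ_k)_{k≥1} be positive real numbers with Σ_{k=1}^∞ λ_k = 1. Then for every pointwise bounded equicontinuous subset Q of C(X, ℝ) and every ε > 0 there exist n, m ∈ ℕ (n, m ≥ 1) such that for every f ∈ Q, | (1/(m+1)) · Σ_{k=1}^n λ_k f(η_k) + m · (f(η_n) − f(η_0)) | < ε. -/
/-!
On the compact set `K` an equicontinuous, pointwise bounded family is uniformly bounded, say by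
`M`, so the first term is at most `M / (m + 1)` whatever `n` is. Fix `m` making this smaller than
`ε / 2`; equicontinuity at the cluster point `η 0` then yields one `n ≥ 1` with
`m |f (η n) - f (η 0)| < ε / 2` for all `f ∈ Q` simultaneously.
-/

open Set Filter Topology Bornology

section

variable {ι X α : Type*} [TopologicalSpace X] [PseudoMetricSpace α] {F : ι → X → α}

theorem EquicontinuousOn.isBounded_iUnion_image {K : Set X} (hK : IsCompact K)
    (hF : EquicontinuousOn F K) (hb : ∀ x ∈ K, IsBounded (range fun i ↦ F i x)) :
    IsBounded (⋃ i, F i '' K) := by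
  have hU : ∀ x ∈ K, {y | ∀ i, dist (F i x) (F i y) < 1} ∈ 𝓝[K] x :=
    fun x hx ↦ hF x hx _ (Metric.dist_mem_uniformity one_pos)
  obtain ⟨t, htK, hKt⟩ := hK.elim_nhdsWithin_subcover _ hU
  refine ((isBounded_biUnion_finset t).2 fun x hx ↦
    (hb x (htK x hx)).cthickening (δ := 1)).subset ?_
  rintro _ ⟨_, ⟨i, rfl⟩, y, hy, rfl⟩
  obtain ⟨x, hx, hxy⟩ := mem_iUnion₂.1 (hKt hy)
  exact mem_iUnion₂.2 ⟨x, hx, Metric.mem_cthickening_of_dist_le _ _ _ _ ⟨i, rfl⟩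
    (dist_comm (F i x) (F i y) ▸ (hxy i).le)⟩

theorem EquicontinuousAt.exists_mem_forall_dist_lt_of_mem_closure {x : X} {s : Set X}
    (hF : EquicontinuousAt F x) (hx : x ∈ closure s) {δ : ℝ} (hδ : 0 < δ) :
    ∃ y ∈ s, ∀ i, dist (F i y) (F i x) < δ := by
  obtain ⟨y, hys, hy⟩ := ((mem_closure_iff_frequently.1 hx).and_eventually
    (Metric.equicontinuousAt_iff_right.1 hF δ hδ)).exists
  exact ⟨y, hys, fun i ↦ dist_comm (F i x) (F i y) ▸ hy i⟩

end

theorem Finset.abs_sum_mul_le_of_sum_le_one {ι : Type*} {s : Finset ι} {w g : ι → ℝ} {M : ℝ}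
    (hw : ∀ i ∈ s, 0 ≤ w i) (hws : ∑ i ∈ s, w i ≤ 1) (hg : ∀ i ∈ s, |g i| ≤ M) (hM : 0 ≤ M) :
    |∑ i ∈ s, w i * g i| ≤ M :=
  calc |∑ i ∈ s, w i * g i|
      ≤ ∑ i ∈ s, w i * M := (abs_sum_le_sum_abs _ _).trans <| sum_le_sum fun i hi ↦ by
        rw [abs_mul, abs_of_nonneg (hw i hi)]; exact mul_le_mul_of_nonneg_left (hg i hi) (hw i hi)
    _ = (∑ i ∈ s, w i) * M := (sum_mul ..).symm
    _ ≤ M := mul_le_of_le_one_left hM hws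

theorem sum_Icc_one_le_of_hasSum_succ {α : Type*} [AddCommMonoid α] [PartialOrder α]
    [IsOrderedAddMonoid α] [TopologicalSpace α] [OrderClosedTopology α] {a : ℕ → α} {s : α}
    (ha : ∀ k, 1 ≤ k → 0 ≤ a k) (hs : HasSum (fun k ↦ a (k + 1)) s) (n : ℕ) :
    ∑ k ∈ Finset.Icc 1 n, a k ≤ s := by
  have : Finset.Icc 1 n = (Finset.range n).map (addRightEmbedding 1) := by
    rw [Finset.range_eq_Ico, Finset.map_add_right_Ico]; rfl
  rw [this, Finset.sum_map]
  exact sum_le_hasSum _ (fun k _ ↦ ha (k + 1) le_add_self) hs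

theorem zero_in_closure_of_a_nm_general
    {X : Type*} [TopologicalSpace X]
    (K : Set X) (hKcomp : IsCompact K)
    (η : ℕ → X) (hηK : ∀ n, 1 ≤ n → η n ∈ K)
    (hcluster : η 0 ∈ closure {x | ∃ n, 1 ≤ n ∧ x = η n})
    (lam : ℕ → ℝ) (hpos : ∀ k, 1 ≤ k → 0 < lam k)
    (hsum : HasSum (fun k : ℕ => lam (k + 1)) 1)
    (Q : Set C(X, ℝ))
    (hpb : ∀ x : X, Bornology.IsBounded ((fun f : C(X, ℝ) => f x) '' Q))
    (heq : Equicontinuous (fun f : Q => ((f : C(X, ℝ)) : X → ℝ)))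
    (ε : ℝ) (hε : 0 < ε) :
    ∃ n m : ℕ, 1 ≤ n ∧ 1 ≤ m ∧ ∀ f ∈ Q,
      |(1 / ((m : ℝ) + 1)) * ∑ k ∈ Finset.Icc 1 n, lam k * f (η k)
        + (m : ℝ) * (f (η n) - f (η 0))| < ε := by
  obtain ⟨M, hM0, hM⟩ := ((heq.equicontinuousOn K).isBounded_iUnion_image hKcomp
    fun x _ ↦ by simpa only [image_eq_range] using hpb x).exists_pos_norm_le
  have hS : ∀ f ∈ Q, ∀ n, |∑ k ∈ Finset.Icc 1 n, lam k * f (η k)| ≤ M := fun f hf n ↦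
    Finset.abs_sum_mul_le_of_sum_le_one
      (fun k hk ↦ (hpos k (Finset.mem_Icc.1 hk).1).le)
      (sum_Icc_one_le_of_hasSum_succ (fun k hk ↦ (hpos k hk).le) hsum n)
      (fun k hk ↦ hM _ (mem_iUnion.2 ⟨⟨f, hf⟩, η k, hηK k (Finset.mem_Icc.1 hk).1, rfl⟩))
      hM0.le
  obtain ⟨m, hm⟩ := exists_nat_gt (2 * M / ε)
  have hm0 : (0 : ℝ) < m := (div_pos (mul_pos two_pos hM0) hε).trans hm
  obtain ⟨_, ⟨n, hn, rfl⟩, hclose⟩ := (heq (η 0)).exists_mem_forall_dist_lt_of_mem_closure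
    hcluster (div_pos hε (mul_pos two_pos hm0))
  refine ⟨n, m, hn, Nat.cast_pos.1 hm0, fun f hf ↦ ?_⟩
  have hmean : |1 / ((m : ℝ) + 1) * ∑ k ∈ Finset.Icc 1 n, lam k * f (η k)| < ε / 2 := by
    rw [abs_mul, abs_of_pos (by positivity), one_div_mul_eq_div, div_lt_iff₀ (by positivity)]
    rw [div_lt_iff₀ hε] at hm
    linarith [hS f hf n]
  have hjump : |(m : ℝ) * (f (η n) - f (η 0))| < ε / 2 := by
    have := (lt_div_iff₀' (by positivity)).1 (hclose ⟨f, hf⟩)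
    rw [abs_mul, abs_of_pos hm0, ← Real.dist_eq]
    linarith
  exact (abs_add_le _ _).trans_lt (add_halves ε ▸ add_lt_add hmean hjump)

/-- With `K`, `(η n)` and `(λ k)` as in Lemma `l:sequence-L(X)`: for every pointwise bounded
equicontinuous `Q ⊆ C(X, ℝ)` and every `ε > 0` there are `n, m ≥ 1` such that for every `f ∈ Q`,
`|(1/(m+1)) Σ_{k=1}^n λ_k f(η_k) + m (f(η_n) - f(η_0))| < ε`. -/
theorem zero_in_closure_of_a_nm
    {X : Type*} [TopologicalSpace X] [T35Space X]
    (K : Set X) (hKcomp : IsCompact K) (hKinf : K.Infinite)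
    (η : ℕ → X) (hηK : ∀ n, 1 ≤ n → η n ∈ K)
    (hinj : ∀ n m, 1 ≤ n → 1 ≤ m → η n = η m → n = m)
    (hcluster : η 0 ∈ closure {x | ∃ n, 1 ≤ n ∧ x = η n})
    (h0 : η 0 ∉ {x | ∃ n, 1 ≤ n ∧ x = η n})
    (lam : ℕ → ℝ) (hpos : ∀ k, 1 ≤ k → 0 < lam k)
    (hsum : HasSum (fun k : ℕ => lam (k + 1)) 1)
    (Q : Set C(X, ℝ))
    (hpb : ∀ x : X, Bornology.IsBounded ((fun f : C(X, ℝ) => f x) '' Q))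
    (heq : Equicontinuous (fun f : Q => ((f : C(X, ℝ)) : X → ℝ)))
    (ε : ℝ) (hε : 0 < ε) :
    ∃ n m : ℕ, 1 ≤ n ∧ 1 ≤ m ∧ ∀ f ∈ Q,
      |(1 / ((m : ℝ) + 1)) * ∑ k ∈ Finset.Icc 1 n, lam k * f (η k)
        + (m : ℝ) * (f (η n) - f (η 0))| < ε :=
  zero_in_closure_of_a_nm_general K hKcomp η hηK hcluster lam hpos hsum Q hpb heq ε hε
end
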